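/- Let φ ∈ K(x₁,…,xₙ) \ K and let ψ₁ and ψ₂ both be generative rational functions for φ (i.e. each ψᵢ is closed and φ ∈ K(ψᵢ)). Then there exist a, b, c, d ∈ K with a·d − b·c ≠ 0 such that ψ₂ = (a·ψ₁ + b)/(c·ψ₁ + d); in particular K(ψ₁) = K(ψ₂). -/

import Mathlib

/-!
A non-constant `φ` lying in both `K(ψ₁)` and `K(ψ₂)` makes each `ψᵢ` algebraic over `K(φ)`, hence
over the other field `K(ψⱼ)`, so closedness gives `K(ψ₁) = K(ψ₂)`. Since `K` is algebraically
closed, `ψ₁ ∉ K` is transcendental, so `K(ψ₁) ≅ K(X)` with `ψ₁ ↦ X`, and `ψ₂` corresponds to some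
`g` with `K(g) = K(X)`. Then `max (deg (num g)) (deg (denom g)) = [K(X) : K(g)] = 1`, so `g` is a
Möbius transformation.
-/

/-- A rational function `φ` in a field extension `F` of `K` is *closed* if the subfield
`K(φ)` is algebraically closed in `F`. -/
def IsClosedRatFunc (K : Type*) {F : Type*} [Field K] [Field F] [Algebra K F] (φ : F) : Prop :=
  ∀ x : F, IsAlgebraic (IntermediateField.adjoin K {φ}) x → x ∈ IntermediateField.adjoin K {φ}

open IntermediateField

namespace RatFunc

variable {K : Type*} [Field K]

theorem mul_sub_mul_ne_zero_of_mul_eq {g : RatFunc K} (hg : ¬∃ k, g = C k) {a b c d : K}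
    (hD : C c * X + C d ≠ 0) (h : g * (C c * X + C d) = C a * X + C b) :
    a * d - b * c ≠ 0 := by
  intro hdet
  -- `ad = bc` forces `c g = a` and `d g = b`, impossible for non-constant `g` unless `c = d = 0`.
  have hdetC : C a * C d - C b * C c = 0 := by simpa using congrArg C hdet
  have hconst : ∀ s t : K, C s * g = C t → s = 0 := fun s t hst ↦ by
    by_contra hs
    refine hg ⟨t / s, ?_⟩
    rw [map_div₀, eq_div_iff (by simpa using hs), mul_comm, hst]
  have hc : c = 0 := hconst c a <| mul_right_cancel₀ hD <| by linear_combination C c * h - hdetC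
  have hd : d = 0 := hconst d b <| mul_right_cancel₀ hD <| by
    linear_combination C d * h + X * hdetC
  simp [hc, hd] at hD

theorem exists_eq_moebius_of_max_natDegree_eq_one {g : RatFunc K}
    (hg : max g.num.natDegree g.denom.natDegree = 1) :
    ∃ a b c d : K, a * d - b * c ≠ 0 ∧ g = (C a * X + C b) / (C c * X + C d) := by
  have hlin : ∀ p : Polynomial K, p.natDegree ≤ 1 →
      algebraMap (Polynomial K) (RatFunc K) p = C (p.coeff 1) * X + C (p.coeff 0) := fun p hp ↦ by
    conv_lhs => rw [Polynomial.eq_X_add_C_of_natDegree_le_one hp]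
    simp
  have hnum := hlin _ (hg ▸ le_max_left _ _)
  have hden := hlin _ (hg ▸ le_max_right _ _)
  have hD : algebraMap (Polynomial K) (RatFunc K) g.denom ≠ 0 := algebraMap_ne_zero g.denom_ne_zero
  have hnc : ¬∃ k, g = C k := by rw [eq_C_iff]; omega
  refine ⟨g.num.coeff 1, g.num.coeff 0, _, _, mul_sub_mul_ne_zero_of_mul_eq hnc (hden ▸ hD) ?_, ?_⟩
  · rw [← hnum, ← hden]
    exact (eq_div_iff hD).mp (num_div_denom g).symm
  · rw [← hnum, ← hden, num_div_denom]

theorem exists_eq_moebius_of_adjoin_eq_top {g : RatFunc K} (hg : K⟮g⟯ = ⊤) :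
    ∃ a b c d : K, a * d - b * c ≠ 0 ∧ g = (C a * X + C b) / (C c * X + C d) := by
  refine exists_eq_moebius_of_max_natDegree_eq_one ?_
  rw [← finrank_eq_max_natDegree, finrank_eq_one_iff_eq_top, hg]

end RatFunc

section

variable {K F : Type*} [Field K] [Field F] [Algebra K F]

theorem IntermediateField.mem_adjoin_simple_of_apply_mem {E : Type*} [Field E] [Algebra K E]
    (f : E →ₐ[K] F) {x y : E} (h : f x ∈ K⟮f y⟯) : x ∈ K⟮y⟯ := by
  rw [← Set.image_singleton, ← adjoin_map, mem_map] at h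
  obtain ⟨z, hz, hzx⟩ := h
  exact f.injective hzx ▸ hz

theorem notMem_range_algebraMap_of_mem_adjoin_simple {x y : F}
    (hx : x ∉ Set.range (algebraMap K F)) (hxy : x ∈ K⟮y⟯) : y ∉ Set.range (algebraMap K F) := by
  rintro ⟨c, rfl⟩
  rw [adjoin_simple_eq_bot_iff.mpr (mem_bot.mpr ⟨c, rfl⟩), mem_bot] at hxy
  exact hx hxy

theorem transcendental_of_notMem_range_algebraMap [IsAlgClosed K] {y : F}
    (hy : y ∉ Set.range (algebraMap K F)) : Transcendental K y := fun halg ↦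
  hy <| minpoly.mem_range_of_degree_eq_one K y <|
    IsAlgClosed.degree_eq_one_of_irreducible K (minpoly.irreducible halg.isIntegral)

theorem isAlgebraic_of_mem_adjoin_simple (M : IntermediateField K F) {φ ψ : F} (hφM : φ ∈ M)
    (hφ : φ ∉ Set.range (algebraMap K F)) (hφψ : φ ∈ K⟮ψ⟯) : IsAlgebraic M ψ := by
  obtain ⟨p, q, rfl⟩ := (mem_adjoin_simple_iff K φ).mp hφψ
  have hq : Polynomial.aeval ψ q ≠ 0 := fun h ↦ hφ ⟨0, by simp [h]⟩
  let φ' : M := ⟨_, hφM⟩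
  refine ⟨p.map (algebraMap K M) - Polynomial.C φ' * q.map (algebraMap K M), fun h0 ↦ ?_, ?_⟩
  · have hq0 : q.leadingCoeff ≠ 0 := by simpa using fun h ↦ hq (by simp [h])
    have hcoeff := congrArg (fun r ↦ algebraMap M F (r.coeff q.natDegree)) h0
    simp only [Polynomial.coeff_sub, Polynomial.coeff_map, Polynomial.coeff_C_mul, map_sub, map_mul,
      Polynomial.coeff_zero, map_zero, ← IsScalarTower.algebraMap_apply] at hcoeff
    refine hφ ⟨p.coeff q.natDegree / q.leadingCoeff, ?_⟩
    rw [map_div₀, div_eq_iff (by simpa using hq0)]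
    exact (sub_eq_zero.mp hcoeff).trans rfl
  · simp [φ', div_mul_cancel₀ _ hq]

theorem exists_eq_moebius_of_adjoin_simple_eq {ψ₁ ψ₂ : F} (hψ₁ : Transcendental K ψ₁)
    (h : K⟮ψ₁⟯ = K⟮ψ₂⟯) :
    ∃ a b c d : K, a * d - b * c ≠ 0 ∧
      ψ₂ = (algebraMap K F a * ψ₁ + algebraMap K F b) /
        (algebraMap K F c * ψ₁ + algebraMap K F d) := by
  let e := RatFunc.algEquivOfTranscendental ψ₁ hψ₁
  let f : RatFunc K →ₐ[K] F := K⟮ψ₁⟯.val.comp e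
  have hfX : f RatFunc.X = ψ₁ := by simp [f, e]
  let g := e.symm ⟨ψ₂, h ▸ mem_adjoin_simple_self K ψ₂⟩
  have hfg : f g = ψ₂ := by simp [f, g]
  have hX : (RatFunc.X : RatFunc K) ∈ K⟮g⟯ :=
    mem_adjoin_simple_of_apply_mem f (by rw [hfX, hfg, ← h]; exact mem_adjoin_simple_self K ψ₁)
  have hgen : K⟮g⟯ = ⊤ := by
    rw [eq_top_iff, ← RatFunc.adjoin_X]
    exact adjoin_simple_le_iff.mpr hX
  obtain ⟨a, b, c, d, hdet, hg⟩ := RatFunc.exists_eq_moebius_of_adjoin_eq_top hgen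
  refine ⟨a, b, c, d, hdet, ?_⟩
  rw [← hfg, hg, ← hfX]
  simp [← RatFunc.algebraMap_eq_C]

end

theorem stmt_4_general {K : Type*} [Field K] [IsAlgClosed K] (n : ℕ)
    (φ ψ₁ ψ₂ : FractionRing (MvPolynomial (Fin n) K))
    (hφ : φ ∉ Set.range (algebraMap K (FractionRing (MvPolynomial (Fin n) K))))
    (hψ₁ : IsClosedRatFunc K ψ₁) (hφψ₁ : φ ∈ IntermediateField.adjoin K {ψ₁})
    (hψ₂ : IsClosedRatFunc K ψ₂) (hφψ₂ : φ ∈ IntermediateField.adjoin K {ψ₂}) :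
    ∃ a b c d : K, a * d - b * c ≠ 0 ∧
      ψ₂ = (algebraMap K (FractionRing (MvPolynomial (Fin n) K)) a * ψ₁ +
              algebraMap K (FractionRing (MvPolynomial (Fin n) K)) b) /
           (algebraMap K (FractionRing (MvPolynomial (Fin n) K)) c * ψ₁ +
              algebraMap K (FractionRing (MvPolynomial (Fin n) K)) d) ∧
      IntermediateField.adjoin K {ψ₁} = IntermediateField.adjoin K {ψ₂} := by
  have h₁₂ : ψ₁ ∈ K⟮ψ₂⟯ := hψ₂ ψ₁ (isAlgebraic_of_mem_adjoin_simple _ hφψ₂ hφ hφψ₁)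
  have h₂₁ : ψ₂ ∈ K⟮ψ₁⟯ := hψ₁ ψ₂ (isAlgebraic_of_mem_adjoin_simple _ hφψ₁ hφ hφψ₂)
  have hadj : K⟮ψ₁⟯ = K⟮ψ₂⟯ :=
    le_antisymm (adjoin_simple_le_iff.mpr h₁₂) (adjoin_simple_le_iff.mpr h₂₁)
  have hψ₁tr := transcendental_of_notMem_range_algebraMap <|
    notMem_range_algebraMap_of_mem_adjoin_simple hφ hφψ₁
  obtain ⟨a, b, c, d, hdet, hmoebius⟩ := exists_eq_moebius_of_adjoin_simple_eq hψ₁tr hadj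
  exact ⟨a, b, c, d, hdet, hmoebius, hadj⟩

theorem stmt_4 {K : Type*} [Field K] [IsAlgClosed K] [CharZero K] (n : ℕ)
    (φ ψ₁ ψ₂ : FractionRing (MvPolynomial (Fin n) K))
    (hφ : φ ∉ Set.range (algebraMap K (FractionRing (MvPolynomial (Fin n) K))))
    (hψ₁ : IsClosedRatFunc K ψ₁) (hφψ₁ : φ ∈ IntermediateField.adjoin K {ψ₁})
    (hψ₂ : IsClosedRatFunc K ψ₂) (hφψ₂ : φ ∈ IntermediateField.adjoin K {ψ₂}) :
    ∃ a b c d : K, a * d - b * c ≠ 0 ∧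
      ψ₂ = (algebraMap K (FractionRing (MvPolynomial (Fin n) K)) a * ψ₁ +
              algebraMap K (FractionRing (MvPolynomial (Fin n) K)) b) /
           (algebraMap K (FractionRing (MvPolynomial (Fin n) K)) c * ψ₁ +
              algebraMap K (FractionRing (MvPolynomial (Fin n) K)) d) ∧
      IntermediateField.adjoin K {ψ₁} = IntermediateField.adjoin K {ψ₂} :=
  stmt_4_general n φ ψ₁ ψ₂ hφ hψ₁ hφψ₁ hψ₂ hφψ₂
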